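/- arXiv:1701.07016 — 2 statements merged into one kernel-verified Lean document; each statement's English description precedes it below -/
import Mathlib

section
/- The Gaussian binomial coefficient factorizes as $\binom{m}{k}_q = \prod_d \Phi_d(q)$, where the product runs over all positive integers $d \leq m$ such that $\lfloor k/d \rfloor + \lfloor (m-k)/d \rfloor < \lfloor m/d \rfloor$, and $\Phi_d$ is the $d$-th cyclotomic polynomial. -/
/-!
Clearing denominators in the `q`-Pascal rule gives
`qbinom (a + b) a · P a · P b = P (a + b)` for `P n = ∏_{i ≤ n} (q^i - 1)` (`qPochhammer`).
Since `q^i - 1 = ∏_{d ∣ i} Φ_d`, `P n = ∏_d Φ_d ^ ⌊n/d⌋`, so `Φ_d` divides `qbinom m k` exactly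
`⌊m/d⌋ - ⌊k/d⌋ - ⌊(m-k)/d⌋` times, and this carry is always `0` or `1`.
-/

open Polynomial Finset

/-- The `q`-integer `[n] = 1 + q + ⋯ + q^(n-1)` as a polynomial in `ℤ[q]`. -/
noncomputable def qint (n : ℕ) : Polynomial ℤ := ∑ i ∈ Finset.range n, Polynomial.X ^ i

/-- The Gaussian binomial coefficient `[n choose k]_q` in `ℤ[q]`, via the `q`-Pascal rule. -/
noncomputable def qbinom : ℕ → ℕ → Polynomial ℤ
  | _, 0 => 1
  | 0, _ + 1 => 0
  | n + 1, k + 1 => qbinom n k + Polynomial.X ^ (k + 1) * qbinom n (k + 1)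

/-- Up to the sign `(-1)^n`, the `q`-Pochhammer symbol `(q;q)_n = ∏ (1 - q^i)`. -/
noncomputable def qPochhammer (n : ℕ) : ℤ[X] := ∏ i ∈ Icc 1 n, (X ^ i - 1)

lemma qPochhammer_zero : qPochhammer 0 = 1 := by simp [qPochhammer]

lemma qPochhammer_succ (n : ℕ) : qPochhammer (n + 1) = qPochhammer n * (X ^ (n + 1) - 1) :=
  prod_Icc_succ_top (by omega) _

lemma qPochhammer_ne_zero (n : ℕ) : qPochhammer n ≠ 0 :=
  prod_ne_zero_iff.mpr fun i hi => by
    simpa using X_pow_sub_C_ne_zero (mem_Icc.mp hi).1 (1 : ℤ)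

lemma qbinom_eq_zero_of_lt : ∀ {n k : ℕ}, n < k → qbinom n k = 0
  | 0, _ + 1, _ => rfl
  | n + 1, k + 1, h => by
    rw [qbinom, qbinom_eq_zero_of_lt (by omega : n < k),
      qbinom_eq_zero_of_lt (by omega : n < k + 1), mul_zero, add_zero]

lemma qbinom_self : ∀ n, qbinom n n = 1
  | 0 => rfl
  | n + 1 => by
    rw [qbinom, qbinom_self n, qbinom_eq_zero_of_lt n.lt_succ_self, mul_zero, add_zero]

lemma qbinom_add_mul_qPochhammer :
    ∀ a b, qbinom (a + b) a * (qPochhammer a * qPochhammer b) = qPochhammer (a + b)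
  | 0, b => by simp [qbinom, qPochhammer_zero]
  | a + 1, 0 => by simp [qbinom_self, qPochhammer_zero]
  | a + 1, b + 1 => by
    have h₁ : qbinom (a + b + 1) a * (qPochhammer a * qPochhammer (b + 1)) =
        qPochhammer (a + b + 1) := qbinom_add_mul_qPochhammer a (b + 1)
    have h₂ : qbinom (a + b + 1) (a + 1) * (qPochhammer (a + 1) * qPochhammer b) =
        qPochhammer (a + b + 1) := by
      rw [Nat.add_right_comm]; exact qbinom_add_mul_qPochhammer (a + 1) b
    rw [qPochhammer_succ b] at h₁
    rw [qPochhammer_succ a] at h₂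
    rw [show a + 1 + (b + 1) = a + b + 1 + 1 by omega, qbinom, qPochhammer_succ (a + b + 1),
      qPochhammer_succ a, qPochhammer_succ b]
    linear_combination (X ^ (a + 1) - 1) * h₁ + X ^ (a + 1) * (X ^ (b + 1) - 1) * h₂
termination_by a b => a + b

lemma prod_Icc_prod_divisors {M : Type*} [CommMonoid M] (f : ℕ → M) {n N : ℕ} (hn : n ≤ N) :
    ∏ i ∈ Icc 1 n, ∏ d ∈ i.divisors, f d = ∏ d ∈ Icc 1 N, f d ^ (n / d) := by
  rw [prod_comm' (t' := Icc 1 N) (s' := fun d => {i ∈ Ioc 0 n | d ∣ i})]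
  · simp only [prod_const, Nat.Ioc_filter_dvd_card_eq_div]
  · intro i d
    simp only [mem_Icc, Nat.mem_divisors, mem_filter, mem_Ioc]
    constructor
    · rintro ⟨⟨hi, hin⟩, hdi, -⟩
      have := Nat.le_of_dvd hi hdi
      have := Nat.pos_of_dvd_of_pos hdi hi
      omega
    · rintro ⟨⟨⟨hi, hin⟩, hdi⟩, -⟩
      exact ⟨⟨hi, hin⟩, hdi, by omega⟩

lemma qPochhammer_eq_prod_cyclotomic_pow {n N : ℕ} (hn : n ≤ N) :
    qPochhammer n = ∏ d ∈ Icc 1 N, cyclotomic d ℤ ^ (n / d) := by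
  rw [← prod_Icc_prod_divisors _ hn, qPochhammer]
  exact prod_congr rfl fun i hi =>
    (prod_cyclotomic_eq_X_pow_sub_one (mem_Icc.mp hi).1 ℤ).symm

lemma ite_mul_pow_div_add_div {M : Type*} [Monoid M] (x : M) (a b d : ℕ) :
    (if a / d + b / d < (a + b) / d then x else 1) * x ^ (a / d + b / d) = x ^ ((a + b) / d) := by
  have hlower := Nat.div_add_div_le_add_div (x := a) (y := b) (z := d)
  have hupper := Nat.add_div_le_div_add_div_add_one a b d
  split_ifs
  · rw [← pow_succ']; congr 1; omega
  · rw [one_mul]; congr 1; omega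

theorem stmt_10 (m k : ℕ) (hk : k ≤ m) :
    qbinom m k
      = ∏ d ∈ (Finset.Icc 1 m).filter (fun d => k / d + (m - k) / d < m / d),
          Polynomial.cyclotomic d ℤ := by
  obtain ⟨n, rfl⟩ := Nat.exists_eq_add_of_le hk
  apply mul_right_cancel₀ (mul_ne_zero (qPochhammer_ne_zero k) (qPochhammer_ne_zero n))
  rw [qbinom_add_mul_qPochhammer, Nat.add_sub_cancel_left,
    qPochhammer_eq_prod_cyclotomic_pow le_rfl,
    qPochhammer_eq_prod_cyclotomic_pow (Nat.le_add_right k n),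
    qPochhammer_eq_prod_cyclotomic_pow (Nat.le_add_left n k),
    ← prod_mul_distrib, prod_filter, ← prod_mul_distrib]
  exact prod_congr rfl fun d _ => by rw [← pow_add, ite_mul_pow_div_add_div]
end

section
/- For all positive integers $n$ and $k$ with $1 \leq k \leq n$, the rational function $B_{n,k}(q) = \frac{[k]}{[n]}\binom{2n}{n-k}_q$ is a polynomial in $q$ with integer coefficients. -/
/-!
Write `[m]` for the `q`-integer. Splitting `[k] = [n + k] - q^k [n]` and using symmetry
`binom(2n, n-k) = binom(2n, n+k)`, the absorption identity
`[n + k] binom(2n, n+k) = [2n] binom(2n-1, n+k-1)` and `[2n] = [n] (1 + q^n)` give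
`[k] binom(2n, n-k) = [n] ((1 + q^n) binom(2n-1, n+k-1) - q^k binom(2n, n-k))`,
so `B_{n,k}` is the integer polynomial in parentheses.
-/

open Polynomial Finset

lemma qint_add (a b : ℕ) : qint (a + b) = qint a + X ^ a * qint b := by
  simp only [qint, sum_range_add, pow_add, mul_sum]

lemma eval_one_qint (n : ℕ) : (qint n).eval 1 = n := by
  simp [qint, eval_finsetSum]

lemma qint_ne_zero {n : ℕ} (hn : n ≠ 0) : qint n ≠ 0 := fun h => by
  have := eval_one_qint n
  rw [h, eval_zero] at this
  omega

@[simp] lemma qbinom_zero_right (m : ℕ) : qbinom m 0 = 1 := by cases m <;> rfl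

lemma qbinom_succ_succ (m j : ℕ) :
    qbinom (m + 1) (j + 1) = qbinom m j + X ^ (j + 1) * qbinom m (j + 1) := rfl

lemma qbinom_of_lt {m j : ℕ} (h : m < j) : qbinom m j = 0 := by
  induction m generalizing j with
  | zero => obtain ⟨j, rfl⟩ := Nat.exists_eq_succ_of_ne_zero (by omega : j ≠ 0); rfl
  | succ m ih =>
    obtain ⟨j, rfl⟩ := Nat.exists_eq_succ_of_ne_zero (by omega : j ≠ 0)
    rw [qbinom_succ_succ, ih (by omega), ih (by omega), mul_zero, add_zero]

@[simp] lemma qbinom_self_s11 (m : ℕ) : qbinom m m = 1 := by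
  induction m with
  | zero => rfl
  | succ m ih => rw [qbinom_succ_succ, ih, qbinom_of_lt (Nat.lt_succ_self m), mul_zero, add_zero]

noncomputable def qfact (n : ℕ) : ℤ[X] := ∏ i ∈ range n, qint (i + 1)

@[simp] lemma qfact_zero : qfact 0 = 1 := rfl

lemma qfact_succ (n : ℕ) : qfact (n + 1) = qfact n * qint (n + 1) := prod_range_succ _ _

lemma qfact_ne_zero (n : ℕ) : qfact n ≠ 0 :=
  prod_ne_zero_iff.2 fun i _ => qint_ne_zero i.succ_ne_zero

lemma qbinom_add_mul_qfact_mul_qfact :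
    ∀ j t : ℕ, qbinom (j + t) j * (qfact j * qfact t) = qfact (j + t)
  | 0, t => by simp
  | j + 1, 0 => by simp
  | j + 1, t + 1 => by
    have ih₁ := qbinom_add_mul_qfact_mul_qfact j (t + 1)
    have ih₂ := qbinom_add_mul_qfact_mul_qfact (j + 1) t
    rw [show j + 1 + t = j + (t + 1) by omega] at ih₂
    rw [show j + 1 + (t + 1) = j + (t + 1) + 1 by omega, qbinom_succ_succ, qfact_succ (j + (t + 1)),
      show j + (t + 1) + 1 = (j + 1) + (t + 1) by omega, qint_add (j + 1) (t + 1)]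
    linear_combination qint (j + 1) * ih₁ + X ^ (j + 1) * qint (t + 1) * ih₂
      + qbinom (j + (t + 1)) j * qfact (t + 1) * qfact_succ j
      + X ^ (j + 1) * qbinom (j + (t + 1)) (j + 1) * qfact (j + 1) * qfact_succ t

lemma qbinom_add_symm (j t : ℕ) : qbinom (j + t) j = qbinom (j + t) t := by
  refine mul_right_cancel₀ (mul_ne_zero (qfact_ne_zero j) (qfact_ne_zero t)) ?_
  have h := qbinom_add_mul_qfact_mul_qfact t j
  rw [add_comm t j] at h
  linear_combination qbinom_add_mul_qfact_mul_qfact j t - h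

lemma qint_mul_qbinom_succ (j t : ℕ) :
    qint (j + 1) * qbinom (j + 1 + t) (j + 1) = qint (j + 1 + t) * qbinom (j + t) j := by
  refine mul_right_cancel₀ (mul_ne_zero (qfact_ne_zero j) (qfact_ne_zero t)) ?_
  have h₁ := qbinom_add_mul_qfact_mul_qfact (j + 1) t
  have h₂ := qbinom_add_mul_qfact_mul_qfact j t
  rw [qfact_succ, show j + 1 + t = j + t + 1 by omega, qfact_succ] at h₁
  rw [show j + 1 + t = j + t + 1 by omega]
  linear_combination h₁ - qint (j + t + 1) * h₂

noncomputable def qCatalanTriangle (n k : ℕ) : ℤ[X] :=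
  (1 + X ^ n) * qbinom (2 * n - 1) (n + k - 1) - X ^ k * qbinom (2 * n) (n - k)

lemma qint_mul_qbinom_eq_qint_mul_qCatalanTriangle {n k : ℕ} (hk : 1 ≤ k) (hkn : k ≤ n) :
    qint k * qbinom (2 * n) (n - k) = qint n * qCatalanTriangle n k := by
  obtain ⟨d, rfl⟩ := Nat.exists_eq_add_of_le hkn
  obtain ⟨a, ha⟩ : ∃ a, k + (k + d) = a + 1 := ⟨k + (k + d) - 1, by omega⟩
  have habs := qint_mul_qbinom_succ a d
  have hsymm := qbinom_add_symm (a + 1) d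
  have hqk : qint (a + 1) = qint k + X ^ k * qint (k + d) := by rw [← ha, qint_add]
  have hq2n : qint (a + 1 + d) = qint (k + d) * (1 + X ^ (k + d)) := by
    rw [show a + 1 + d = (k + d) + (k + d) by omega, qint_add]; ring
  rw [qCatalanTriangle, show 2 * (k + d) - 1 = a + d by omega, show k + d + k - 1 = a by omega,
    show 2 * (k + d) = a + 1 + d by omega, show k + d - k = d by omega]
  linear_combination habs - (qint k + X ^ k * qint (k + d)) * hsymm
    - qbinom (a + 1 + d) (a + 1) * hqk + qbinom (a + d) a * hq2n

lemma aeval_ratFuncX_injective (K : Type*) [Field K] [CharZero K] :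
    Function.Injective (aeval (RatFunc.X : RatFunc K) : ℤ[X] → RatFunc K) := by
  intro p q hpq
  simp only [← RatFunc.algebraMap_X, aeval_algebraMap_apply, aeval_X_left_eq_map] at hpq
  exact map_injective _ (RingHom.injective_int _) (RatFunc.algebraMap_injective K hpq)

theorem stmt_11 (n k : ℕ) (hk1 : 1 ≤ k) (hkn : k ≤ n) :
    ∃ p : Polynomial ℤ,
      Polynomial.aeval (RatFunc.X : RatFunc ℚ) p
        = Polynomial.aeval (RatFunc.X : RatFunc ℚ) (qint k) /
            Polynomial.aeval (RatFunc.X : RatFunc ℚ) (qint n) *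
            Polynomial.aeval (RatFunc.X : RatFunc ℚ) (qbinom (2 * n) (n - k)) := by
  refine ⟨qCatalanTriangle n k, ?_⟩
  have hn : aeval (RatFunc.X : RatFunc ℚ) (qint n) ≠ 0 :=
    (map_ne_zero_iff _ (aeval_ratFuncX_injective ℚ)).2 (qint_ne_zero (by omega))
  rw [div_mul_eq_mul_div, eq_div_iff hn, ← map_mul, ← map_mul,
    qint_mul_qbinom_eq_qint_mul_qCatalanTriangle hk1 hkn, mul_comm]
end
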